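/- arXiv:2212.06358 — 2 statements merged into one kernel-verified Lean document; each statement's English description precedes it below -/
import Mathlib

section
/- Let i ∈ {1,…,m}, let x, x_* ∈ ℂⁿ satisfy A_{i,:} x_* = b_i, let α ∈ ℝ, and set h = (b_i − A_{i,:} x)/‖A_{i,:}‖₂². Then ‖x − x_* + α·h·(A_{i,:})ᴴ‖₂² = ‖x − x_*‖₂² + (α² − 2α)·ψ_i(x). -/
open Matrix Finset

noncomputable section

/-- Squared Euclidean norm `‖v‖₂²` of a complex vector. -/
def vecNormSq {k : ℕ} (v : Fin k → ℂ) : ℝ := ∑ i, ‖v i‖ ^ 2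

variable {m n : ℕ}

/-- Squared Euclidean norm `‖A_{i,:}‖₂²` of the `i`-th row of `A`. -/
def rowNormSq (A : Matrix (Fin m) (Fin n) ℂ) (i : Fin m) : ℝ := ∑ j, ‖A i j‖ ^ 2

/-- Squared Frobenius norm `‖A‖_F²`. -/
def frobSq (A : Matrix (Fin m) (Fin n) ℂ) : ℝ := ∑ i, ∑ j, ‖A i j‖ ^ 2

/-- `ψ_i(x) = |b_i − A_{i,:} x|² / ‖A_{i,:}‖₂²`. -/
def psi (A : Matrix (Fin m) (Fin n) ℂ) (b : Fin m → ℂ) (x : Fin n → ℂ) (i : Fin m) : ℝ :=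
  ‖b i - A.mulVec x i‖ ^ 2 / rowNormSq A i

/-- `max_{i ∈ [m]} ψ_i(x)`. -/
def psiMax (A : Matrix (Fin m) (Fin n) ℂ) (b : Fin m → ℂ) (x : Fin n → ℂ) : ℝ :=
  ⨆ i, psi A b x i

/-- The row submatrix `A_{S,:}` of `A`, realized by replacing the rows outside `S` with zero
(which changes neither the Frobenius norm nor the largest singular value). -/
def rowSub (A : Matrix (Fin m) (Fin n) ℂ) (S : Finset (Fin m)) : Matrix (Fin m) (Fin n) ℂ :=
  fun i j => if i ∈ S then A i j else 0

/-- `σ_r(A)²` : the smallest nonzero eigenvalue of `AᴴA`. -/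
def sigmaRSq (A : Matrix (Fin m) (Fin n) ℂ) : ℝ :=
  sInf {μ : ℝ | μ ≠ 0 ∧ ∃ i, (Matrix.isHermitian_conjTranspose_mul_self A).eigenvalues i = μ}

/-- `σ₁(M)²` : the largest eigenvalue of `MᴴM`, i.e. the largest singular value squared. -/
def sigma1Sq {k : Type*} [Fintype k] (M : Matrix k (Fin n) ℂ) : ℝ :=
  ⨆ i, (Matrix.isHermitian_conjTranspose_mul_self M).eigenvalues i

/-- `Û(x) = {i ∈ [m] : ψ_i(x) ≠ 0}`. -/
def Uhat (A : Matrix (Fin m) (Fin n) ℂ) (b : Fin m → ℂ) (x : Fin n → ℂ) : Finset (Fin m) :=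
  Finset.univ.filter fun i => psi A b x i ≠ 0

/-- The greedy index set `U(x)` with relaxation parameter `θ = 1/2`. -/
def Ugreedy (A : Matrix (Fin m) (Fin n) ℂ) (b : Fin m → ℂ) (x : Fin n → ℂ) : Finset (Fin m) :=
  Finset.univ.filter fun i =>
    (1 / 2) * psiMax A b x + (1 / 2) * (vecNormSq (b - A.mulVec x) / frobSq A) ≤ psi A b x i

/-- `η(x) = Σ_{i ∈ U(x)} (b_i − A_{i,:}x) e_i`. -/
def eta (A : Matrix (Fin m) (Fin n) ℂ) (b : Fin m → ℂ) (x : Fin n → ℂ) : Fin m → ℂ :=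
  fun i => if i ∈ Ugreedy A b x then b i - A.mulVec x i else 0

/-- `uᴴ v`, the conjugate dot product. -/
def dotc {k : ℕ} (u v : Fin k → ℂ) : ℂ := ∑ i, (starRingEnd ℂ) (u i) * v i

/-- `φ(x, η) = |ηᴴ(b − A x)|² / ‖Aᴴ η‖₂²`. -/
def phi (A : Matrix (Fin m) (Fin n) ℂ) (b : Fin m → ℂ) (x : Fin n → ℂ) (η : Fin m → ℂ) : ℝ :=
  ‖dotc η (b - A.mulVec x)‖ ^ 2 / vecNormSq (Aᴴ.mulVec η)

end

/-! The step `α h (A_{i,:})ᴴ` is a multiple of `star (A i)`, so expanding the square leaves the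
cross term `2 Re(c · conj(A_{i,:}(x − x_*)))`; since `A_{i,:} x_* = b_i`, the inner product
`A_{i,:}(x − x_*)` is `−(b_i − A_{i,:}x)`, and the cross term and the square of the step combine
into `(α² − 2α) ψ_i(x)`. -/

lemma vecNormSq_eq_norm_sq {k : ℕ} (v : Fin k → ℂ) : vecNormSq v = ‖WithLp.toLp 2 v‖ ^ 2 :=
  (EuclideanSpace.norm_sq_eq _).symm

lemma vecNormSq_nonneg {k : ℕ} (v : Fin k → ℂ) : 0 ≤ vecNormSq v := by
  rw [vecNormSq_eq_norm_sq]
  positivity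

lemma vecNormSq_star {k : ℕ} (v : Fin k → ℂ) : vecNormSq (star v) = vecNormSq v := by
  simp [vecNormSq]

lemma rowNormSq_eq_vecNormSq {m n : ℕ} (A : Matrix (Fin m) (Fin n) ℂ) (i : Fin m) :
    rowNormSq A i = vecNormSq (A i) := rfl

lemma vecNormSq_add_smul_star {k : ℕ} (u a : Fin k → ℂ) (c : ℂ) :
    vecNormSq (u + c • star a) =
      vecNormSq u + 2 * (c * star (a ⬝ᵥ u)).re + ‖c‖ ^ 2 * vecNormSq a := by
  have hinner : inner ℂ (WithLp.toLp 2 u) (WithLp.toLp 2 (star a)) = star (a ⬝ᵥ u) := by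
    rw [EuclideanSpace.inner_eq_star_dotProduct]
    simp [dotProduct_comm, star_dotProduct]
  rw [← vecNormSq_star a, vecNormSq_eq_norm_sq, vecNormSq_eq_norm_sq, vecNormSq_eq_norm_sq,
    WithLp.toLp_add, WithLp.toLp_smul, @norm_add_sq ℂ, inner_smul_right, hinner, norm_smul,
    mul_pow]
  rfl

lemma vecNormSq_add_relaxed_kaczmarz_step {k : ℕ} (u a : Fin k → ℂ) {d : ℂ}
    (hd : a ⬝ᵥ u = -d) (α : ℝ) :
    vecNormSq (u + ((α : ℂ) * (d / (vecNormSq a : ℂ))) • star a) =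
      vecNormSq u + (α ^ 2 - 2 * α) * (‖d‖ ^ 2 / vecNormSq a) := by
  rw [vecNormSq_add_smul_star, hd]
  have hr := vecNormSq_nonneg a
  set r := vecNormSq a
  have hcross : ((α : ℂ) * (d / (r : ℂ)) * star (-d)).re = -(α * ‖d‖ ^ 2 / r) := by
    rw [star_neg, mul_neg, Complex.star_def, mul_div_assoc', div_mul_eq_mul_div, mul_assoc,
      Complex.mul_conj, Complex.normSq_eq_norm_sq]
    norm_cast
  rw [hcross, norm_mul, norm_div, Complex.norm_real, Complex.norm_real, Real.norm_eq_abs,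
    Real.norm_eq_abs, abs_of_nonneg hr, mul_pow, div_pow, sq_abs]
  -- for `a = 0` both the step and `‖d‖² / r` are `0`, as division by zero is `0` in Lean
  rcases eq_or_ne r 0 with hr0 | hr0
  · simp [hr0]
  · field_simp
    ring

theorem stmt15_general {m n : ℕ} (A : Matrix (Fin m) (Fin n) ℂ) (b : Fin m → ℂ)
    (i : Fin m) (x xs : Fin n → ℂ)
    (hxs : A.mulVec xs i = b i) (α : ℝ) :
    vecNormSq (x - xs +
        ((α : ℂ) * ((b i - A.mulVec x i) / (rowNormSq A i : ℂ))) • star (A i)) =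
      vecNormSq (x - xs) + (α ^ 2 - 2 * α) * psi A b x i := by
  have hrow : A i ⬝ᵥ (x - xs) = -(b i - A.mulVec x i) := by
    rw [dotProduct_sub]
    change A.mulVec x i - A.mulVec xs i = _
    rw [hxs]
    ring
  simpa only [psi, rowNormSq_eq_vecNormSq] using
    vecNormSq_add_relaxed_kaczmarz_step (x - xs) (A i) hrow α

/-- relaxed Kaczmarz one-step identity: if `A_{i,:} x_* = b_i` and
`h = (b_i − A_{i,:}x)/‖A_{i,:}‖₂²`, then
`‖x − x_* + α h (A_{i,:})ᴴ‖₂² = ‖x − x_*‖₂² + (α² − 2α) ψ_i(x)`. -/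
theorem stmt15 {m n : ℕ} (A : Matrix (Fin m) (Fin n) ℂ) (b : Fin m → ℂ)
    (hA : ∀ i, A i ≠ 0) (i : Fin m) (x xs : Fin n → ℂ)
    (hxs : A.mulVec xs i = b i) (α : ℝ) :
    vecNormSq (x - xs +
        ((α : ℂ) * ((b i - A.mulVec x i) / (rowNormSq A i : ℂ))) • star (A i)) =
      vecNormSq (x - xs) + (α ^ 2 - 2 * α) * psi A b x i :=
  stmt15_general A b i x xs hxs α
end

section
/- Let x ∈ ℂⁿ satisfy x − x_* ∈ range(Aᴴ) and b − Ax ≠ 0. Then max_{i∈{1,…,m}} ψ_i(x) ≥ (σ_r(A)² / ‖A_{Û(x),:}‖_F²) · ‖x − x_*‖₂². -/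
open Matrix Finset

/-! Write `x − x_* = Aᴴ y`. In an eigenbasis of `AᴴA` the vector `Aᴴ y` has no component along
eigenvectors with eigenvalue `0`, so `‖A (x − x_*)‖² ≥ σ_r(A)² ‖x − x_*‖²`. Since `A x_* = b`, the
left side is the squared residual `‖b − A x‖² = ∑ᵢ ‖A_{i,:}‖² ψᵢ(x)`, in which only the rows in
`Û(x)` contribute; hence it is at most `‖A_{Û(x),:}‖_F² · maxᵢ ψᵢ(x)`. When that Frobenius norm
vanishes, the claimed bound reads `0 ≤ maxᵢ ψᵢ(x)` because `x / 0 = 0`. -/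

open scoped ComplexOrder

namespace Matrix

variable {𝕜 ι : Type*} [RCLike 𝕜] [Fintype ι]

lemma re_star_dotProduct_self (v : ι → 𝕜) : RCLike.re (star v ⬝ᵥ v) = ∑ i, ‖v i‖ ^ 2 := by
  simp only [dotProduct, Pi.star_apply, RCLike.star_def, RCLike.conj_mul, map_sum]
  norm_cast

variable [DecidableEq ι]

lemma star_dotProduct_star_mulVec_self {U : Matrix ι ι 𝕜} (hU : U ∈ unitaryGroup ι 𝕜)
    (v : ι → 𝕜) : star (star U *ᵥ v) ⬝ᵥ (star U *ᵥ v) = star v ⬝ᵥ v := by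
  rw [star_mulVec, star_eq_conjTranspose, conjTranspose_conjTranspose, ← dotProduct_mulVec,
    mulVec_mulVec, ← star_eq_conjTranspose, mem_unitaryGroup_iff.mp hU, one_mulVec]

namespace IsHermitian

variable {H : Matrix ι ι 𝕜} (hH : H.IsHermitian)

lemma re_star_dotProduct_mulVec (v : ι → 𝕜) :
    RCLike.re (star v ⬝ᵥ (H *ᵥ v)) =
      ∑ j, hH.eigenvalues j * ‖(star (hH.eigenvectorUnitary : Matrix ι ι 𝕜) *ᵥ v) j‖ ^ 2 := by
  set U : Matrix ι ι 𝕜 := (hH.eigenvectorUnitary : Matrix ι ι 𝕜)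
  have hHv : H *ᵥ v = U *ᵥ (diagonal (RCLike.ofReal ∘ hH.eigenvalues) *ᵥ (star U *ᵥ v)) := by
    conv_lhs => rw [hH.spectral_theorem]
    rw [Unitary.conjStarAlgAut_apply, mulVec_mulVec, mulVec_mulVec]
  have hstar : star (star U *ᵥ v) = star v ᵥ* U := by
    rw [star_mulVec, star_eq_conjTranspose, conjTranspose_conjTranspose]
  rw [hHv, dotProduct_mulVec, ← hstar]
  simp only [dotProduct, Pi.star_apply, mulVec_diagonal, Function.comp_apply, RCLike.star_def,
    map_sum]
  refine Finset.sum_congr rfl fun j _ => ?_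
  rw [mul_left_comm, RCLike.conj_mul]
  norm_cast

lemma star_eigenvectorUnitary_mulVec_apply (v : ι → 𝕜) (j : ι) :
    (star (hH.eigenvectorUnitary : Matrix ι ι 𝕜) *ᵥ v) j = star ⇑(hH.eigenvectorBasis j) ⬝ᵥ v := by
  simp [mulVec, dotProduct, star_apply]

end IsHermitian

lemma star_eigenvectorUnitary_mulVec_conjTranspose_mulVec_apply_eq_zero
    {κ : Type*} [Fintype κ] (A : Matrix κ ι 𝕜)
    (y : κ → 𝕜) {j : ι} (hj : (isHermitian_conjTranspose_mul_self A).eigenvalues j = 0) :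
    (star ((isHermitian_conjTranspose_mul_self A).eigenvectorUnitary : Matrix ι ι 𝕜) *ᵥ
      (Aᴴ *ᵥ y)) j = 0 := by
  set hB := isHermitian_conjTranspose_mul_self A
  set u : ι → 𝕜 := ⇑(hB.eigenvectorBasis j)
  have hAu : A *ᵥ u = 0 := by
    rw [← conjTranspose_mul_self_mulVec_eq_zero, hB.mulVec_eigenvectorBasis, hj, zero_smul]
  rw [hB.star_eigenvectorUnitary_mulVec_apply, dotProduct_mulVec, ← star_mulVec, hAu, star_zero,
    zero_dotProduct]

end Matrix

section

variable {m n : ℕ}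

lemma vecNormSq_eq_re_star_dotProduct {k : ℕ} (v : Fin k → ℂ) :
    vecNormSq v = RCLike.re (star v ⬝ᵥ v) :=
  (re_star_dotProduct_self v).symm

lemma vecNormSq_sub_comm {k : ℕ} (u v : Fin k → ℂ) : vecNormSq (u - v) = vecNormSq (v - u) := by
  simp only [vecNormSq, Pi.sub_apply, norm_sub_rev]

lemma sigmaRSq_le_eigenvalues (A : Matrix (Fin m) (Fin n) ℂ) {j : Fin n}
    (hj : (isHermitian_conjTranspose_mul_self A).eigenvalues j ≠ 0) :
    sigmaRSq A ≤ (isHermitian_conjTranspose_mul_self A).eigenvalues j := by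
  refine csInf_le ⟨0, ?_⟩ ⟨hj, j, rfl⟩
  rintro μ ⟨-, i, rfl⟩
  exact eigenvalues_conjTranspose_mul_self_nonneg A i

lemma sigmaRSq_mul_vecNormSq_le (A : Matrix (Fin m) (Fin n) ℂ) (y : Fin m → ℂ) :
    sigmaRSq A * vecNormSq (Aᴴ *ᵥ y) ≤ vecNormSq (A *ᵥ (Aᴴ *ᵥ y)) := by
  set hB := isHermitian_conjTranspose_mul_self A
  set v := Aᴴ *ᵥ y
  set c := star (hB.eigenvectorUnitary : Matrix (Fin n) (Fin n) ℂ) *ᵥ v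
  have hAv : vecNormSq (A *ᵥ v) = ∑ j, hB.eigenvalues j * ‖c j‖ ^ 2 := by
    rw [vecNormSq_eq_re_star_dotProduct, star_mulVec, ← dotProduct_mulVec, mulVec_mulVec,
      hB.re_star_dotProduct_mulVec]
  have hv : vecNormSq v = ∑ j, ‖c j‖ ^ 2 := by
    rw [vecNormSq_eq_re_star_dotProduct,
      ← star_dotProduct_star_mulVec_self hB.eigenvectorUnitary.2, re_star_dotProduct_self]
  rw [hAv, hv, mul_sum]
  refine sum_le_sum fun j _ => ?_
  by_cases hj : hB.eigenvalues j = 0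
  · have hc : c j = 0 := star_eigenvectorUnitary_mulVec_conjTranspose_mulVec_apply_eq_zero A y hj
    simp [hc, hj]
  · exact mul_le_mul_of_nonneg_right (sigmaRSq_le_eigenvalues A hj) (sq_nonneg _)

variable {A : Matrix (Fin m) (Fin n) ℂ} {b : Fin m → ℂ}

lemma rowNormSq_eq_zero_iff {i : Fin m} : rowNormSq A i = 0 ↔ A i = 0 := by
  simp [rowNormSq, Finset.sum_eq_zero_iff_of_nonneg, funext_iff]

lemma rowNormSq_nonneg (i : Fin m) : 0 ≤ rowNormSq A i := by
  unfold rowNormSq; positivity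

lemma frobSq_eq_sum_rowNormSq : frobSq A = ∑ i, rowNormSq A i := rfl

lemma frobSq_nonneg : 0 ≤ frobSq A := sum_nonneg fun i _ => rowNormSq_nonneg i

lemma psiMax_nonneg (x : Fin n → ℂ) : 0 ≤ psiMax A b x :=
  Real.iSup_nonneg fun i => div_nonneg (sq_nonneg _) (rowNormSq_nonneg i)

lemma psi_le_psiMax (x : Fin n → ℂ) (i : Fin m) : psi A b x i ≤ psiMax A b x :=
  le_ciSup (Set.finite_range _).bddAbove i

/-- A zero row of a consistent system has zero residual, so `x / 0 = 0` in `psi` is harmless. -/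
lemma norm_sq_sub_mulVec_eq_rowNormSq_mul_psi {xs : Fin n → ℂ} (hxs : A *ᵥ xs = b)
    (x : Fin n → ℂ) (i : Fin m) :
    ‖b i - (A *ᵥ x) i‖ ^ 2 = rowNormSq A i * psi A b x i := by
  by_cases h : rowNormSq A i = 0
  · have hrow : A i = 0 := rowNormSq_eq_zero_iff.mp h
    simp [← hxs, h, mulVec, hrow]
  · rw [psi, mul_div_cancel₀ _ h]

lemma norm_sq_sub_mulVec_le {xs : Fin n → ℂ} (hxs : A *ᵥ xs = b) (x : Fin n → ℂ) (i : Fin m) :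
    ‖b i - (A *ᵥ x) i‖ ^ 2 ≤ rowNormSq (rowSub A (Uhat A b x)) i * psiMax A b x := by
  rw [norm_sq_sub_mulVec_eq_rowNormSq_mul_psi hxs]
  by_cases hi : i ∈ Uhat A b x
  · have hrow : rowNormSq (rowSub A (Uhat A b x)) i = rowNormSq A i := by
      simp [rowNormSq, rowSub, hi]
    rw [hrow]
    exact mul_le_mul_of_nonneg_left (psi_le_psiMax x i) (rowNormSq_nonneg i)
  · have hpsi : psi A b x i = 0 := by simpa [Uhat] using hi
    rw [hpsi, mul_zero]
    exact mul_nonneg (rowNormSq_nonneg i) (psiMax_nonneg x)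

lemma vecNormSq_sub_mulVec_le {xs : Fin n → ℂ} (hxs : A *ᵥ xs = b) (x : Fin n → ℂ) :
    vecNormSq (b - A *ᵥ x) ≤ frobSq (rowSub A (Uhat A b x)) * psiMax A b x := by
  rw [frobSq_eq_sum_rowNormSq, sum_mul]
  exact sum_le_sum fun i _ => norm_sq_sub_mulVec_le hxs x i

end

theorem stmt17_general {m n : ℕ} (A : Matrix (Fin m) (Fin n) ℂ) (b : Fin m → ℂ)
    (xs : Fin n → ℂ) (hxs1 : A.mulVec xs = b)
    (x : Fin n → ℂ) (hx : ∃ y, x - xs = Aᴴ.mulVec y) :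
    (sigmaRSq A / frobSq (rowSub A (Uhat A b x))) * vecNormSq (x - xs) ≤ psiMax A b x := by
  obtain ⟨y, hy⟩ := hx
  have hspectral : sigmaRSq A * vecNormSq (x - xs) ≤ vecNormSq (b - A *ᵥ x) := by
    have h := sigmaRSq_mul_vecNormSq_le A y
    rwa [← hy, mulVec_sub, hxs1, vecNormSq_sub_comm (A *ᵥ x)] at h
  rw [div_mul_eq_mul_div]
  exact div_le_of_le_mul₀ frobSq_nonneg (psiMax_nonneg x)
    (hspectral.trans ((vecNormSq_sub_mulVec_le hxs1 x).trans_eq (mul_comm _ _)))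

/-- if `x − x_* ∈ range(Aᴴ)` and `b − Ax ≠ 0`, then
`max_i ψ_i(x) ≥ (σ_r(A)² / ‖A_{Û(x),:}‖_F²) · ‖x − x_*‖₂²`. -/
theorem stmt17 {m n : ℕ} (A : Matrix (Fin m) (Fin n) ℂ) (b : Fin m → ℂ)
    (hA : ∀ i, A i ≠ 0)
    (xs : Fin n → ℂ) (hxs1 : A.mulVec xs = b) (hxs2 : ∃ y, xs = Aᴴ.mulVec y)
    (x : Fin n → ℂ) (hx : ∃ y, x - xs = Aᴴ.mulVec y)
    (hres : b - A.mulVec x ≠ 0) :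
    (sigmaRSq A / frobSq (rowSub A (Uhat A b x))) * vecNormSq (x - xs) ≤ psiMax A b x :=
  stmt17_general A b xs hxs1 x hx
end
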